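/- arXiv:1310.5292 — 2 statements merged into one kernel-verified Lean document; each statement's English description precedes it below -/
import Mathlib

section
/- Let G be a connected graph on n ≥ 2 vertices with transmissions 𝔻₁ ≥ ... ≥ 𝔻_n. Then ρ(𝔻ℚ(G)) ≥ (3𝔻_n − 1 + √((𝔻_n + 1)² + 8·Σ_{k=1}^{n−1}(𝔻_k − 𝔻_n)))/2. -/
/-! Testing the Rayleigh quotient on the all-ones vector gives `ρ ≥ 2W/n` with `W = ∑ 𝔻_i`.
Since `W ≥ n 𝔻_n` and, by connectedness, `𝔻_n ≥ n - 1`, this yields `ρ ≥ 2𝔻_n ≥ 𝔻_n + n - 1`.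
After squaring, the claimed bound reduces to `4 (ρ - 2𝔻_n) (ρ - 𝔻_n + 1 - n) ≥ 0`. -/

open Matrix Finset Real

/-- Spectral radius: largest modulus of a complex eigenvalue (root of the
characteristic polynomial). -/
noncomputable def specRad {n : ℕ} (A : Matrix (Fin n) (Fin n) ℝ) : ℝ :=
  (((A.map (Complex.ofReal)).charpoly.roots).map (fun z => ‖z‖)).foldr max 0

/-- Irreducibility of a nonnegative matrix. -/
def Irred {n : ℕ} (A : Matrix (Fin n) (Fin n) ℝ) : Prop :=
  ∀ i j : Fin n, ∃ k : ℕ, 0 < (A ^ k) i j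

lemma le_foldr_max_of_mem {s : Multiset ℝ} {a : ℝ} (h : a ∈ s) : a ≤ s.foldr max 0 := by
  induction s using Multiset.induction with
  | empty => simp at h
  | cons b t ih =>
    rw [Multiset.foldr_cons]
    rcases Multiset.mem_cons.1 h with rfl | h
    · exact le_max_left _ _
    · exact (ih h).trans (le_max_right _ _)

lemma abs_le_specRad_of_mem_spectrum {n : ℕ} {A : Matrix (Fin n) (Fin n) ℝ} {μ : ℝ}
    (hμ : μ ∈ spectrum ℝ A) : |μ| ≤ specRad A := by
  have hroot : (μ : ℂ) ∈ (A.map Complex.ofReal).charpoly.roots := by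
    have hC : (A.map Complex.ofReal).charpoly = A.charpoly.map Complex.ofRealHom :=
      charpoly_map A Complex.ofRealHom
    rw [hC]
    refine Multiset.mem_of_le (Polynomial.map_roots_le (A.charpoly_monic.map _).ne_zero)
      (Multiset.mem_map_of_mem _ ?_)
    exact (Polynomial.mem_roots A.charpoly_monic.ne_zero).2 (mem_spectrum_iff_isRoot_charpoly.1 hμ)
  simpa [specRad] using le_foldr_max_of_mem (Multiset.mem_map_of_mem (fun z : ℂ => ‖z‖) hroot)

open scoped MatrixOrder in
-- The largest real eigenvalue `r` dominates `A` in the Loewner order: `A ≤ r • 1`.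
lemma dotProduct_mulVec_le_specRad_mul {n : ℕ} {A : Matrix (Fin n) (Fin n) ℝ}
    (hA : A.IsHermitian) (v : Fin n → ℝ) : v ⬝ᵥ (A *ᵥ v) ≤ specRad A * (v ⬝ᵥ v) := by
  rcases isEmpty_or_nonempty (Fin n) with _ | _
  · simp [dotProduct]
  obtain ⟨r, hr, hmax⟩ := Set.exists_max_image (spectrum ℝ A) id finite_real_spectrum
    (by simpa [hA.spectrum_real_eq_range_eigenvalues] using Set.range_nonempty _)
  have hle : A ≤ algebraMap ℝ _ r := le_algebraMap_of_spectrum_le hmax hA.isSelfAdjoint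
  have hpsd : 0 ≤ v ⬝ᵥ ((algebraMap ℝ _ r - A) *ᵥ v) :=
    (Matrix.le_iff.mp hle).dotProduct_mulVec_nonneg v
  rw [Algebra.algebraMap_eq_smul_one, sub_mulVec, smul_mulVec, one_mulVec, dotProduct_sub,
    dotProduct_smul, smul_eq_mul] at hpsd
  calc v ⬝ᵥ (A *ᵥ v) ≤ r * (v ⬝ᵥ v) := by linarith
    _ ≤ specRad A * (v ⬝ᵥ v) := mul_le_mul_of_nonneg_right
        ((le_abs_self r).trans (abs_le_specRad_of_mem_spectrum hr)) (dotProduct_self_star_nonneg v)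

namespace SimpleGraph

variable {V : Type*} (G : SimpleGraph V)

lemma isHermitian_diagonal_add_dist [DecidableEq V] (D : V → ℝ) :
    (diagonal D + of fun i j => (G.dist i j : ℝ)).IsHermitian :=
  (isHermitian_diagonal D).add <| by
    ext i j; simp [dist_comm]

variable [Fintype V]

noncomputable def transmission (i : V) : ℝ := ∑ j, (G.dist i j : ℝ)

lemma Connected.card_sub_one_le_transmission {G : SimpleGraph V} (hG : G.Connected) (i : V) :
    (Fintype.card V : ℝ) - 1 ≤ G.transmission i := by
  classical
  calc (Fintype.card V : ℝ) - 1 = ∑ _j ∈ univ.erase i, (1 : ℝ) := by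
        rw [sum_const, card_erase_of_mem (mem_univ i), card_univ, nsmul_one,
          Nat.cast_pred (Fintype.card_pos_iff.2 ⟨i⟩)]
    _ ≤ ∑ j ∈ univ.erase i, (G.dist i j : ℝ) := sum_le_sum fun j hj => by
        exact_mod_cast hG.pos_dist_of_ne (Ne.symm (mem_erase.1 hj).1)
    _ = G.transmission i := sum_erase _ (by simp)

lemma one_dotProduct_diagonal_transmission_add_dist_mulVec_one [DecidableEq V] :
    (1 : V → ℝ) ⬝ᵥ ((diagonal G.transmission + of fun i j => (G.dist i j : ℝ)) *ᵥ 1) =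
      2 * ∑ i, G.transmission i := by
  have hrow : (diagonal G.transmission + of fun i j => (G.dist i j : ℝ)) *ᵥ 1 =
      fun i => 2 * G.transmission i := by
    funext i
    rw [add_mulVec, Pi.add_apply, mulVec_diagonal]
    simp only [mulVec, dotProduct, of_apply, Pi.one_apply, mul_one, transmission]
    ring
  simp [hrow, dotProduct, mul_sum]

end SimpleGraph

lemma half_three_mul_sub_one_add_sqrt_le {N m T μ : ℝ} (hN : 0 < N) (hT : 2 * T ≤ μ * N)
    (hmT : N * m ≤ T) (hm : N - 1 ≤ m) :
    (3 * m - 1 + √((m + 1) ^ 2 + 8 * (T - N * m))) / 2 ≤ μ := by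
  have h2m : 2 * m ≤ μ := le_of_mul_le_mul_right (by linarith) hN
  have hsq : (m + 1) ^ 2 + 8 * (T - N * m) ≤ (2 * μ - 3 * m + 1) ^ 2 := by
    nlinarith [mul_nonneg (sub_nonneg.2 h2m) (by linarith : (0 : ℝ) ≤ μ - m + 1 - N)]
  have hsqrt := Real.sqrt_le_iff.2 ⟨by linarith, hsq⟩
  linarith

lemma sum_Iio_sub_eq_sum_sub_card_mul {n : ℕ} (f : Fin n → ℝ) (h : n - 1 < n) :
    ∑ k ∈ Iio (⟨n - 1, h⟩ : Fin n), (f k - f ⟨n - 1, h⟩) = ∑ k, f k - n * f ⟨n - 1, h⟩ := by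
  have : Iio (⟨n - 1, h⟩ : Fin n) = univ.erase ⟨n - 1, h⟩ := by
    ext k; simp [Fin.lt_def, Fin.ext_iff]; omega
  rw [this, sum_erase _ (sub_self _), sum_sub_distrib]
  simp

theorem stmt_17 {n : ℕ} (hn : 2 ≤ n) (G : SimpleGraph (Fin n)) (hconn : G.Connected)
    (D : Fin n → ℝ) (hD : ∀ i, D i = ∑ j, (G.dist i j : ℝ))
    (hord : ∀ i j : Fin n, i ≤ j → D j ≤ D i) :
    specRad (Matrix.diagonal D + Matrix.of fun i j : Fin n => (G.dist i j : ℝ)) ≥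
      (3 * D ⟨n - 1, by omega⟩ - 1 +
        Real.sqrt ((D ⟨n - 1, by omega⟩ + 1) ^ 2 +
          8 * ∑ k ∈ Finset.Iio (⟨n - 1, by omega⟩ : Fin n),
            (D k - D ⟨n - 1, by omega⟩))) / 2 := by
  obtain rfl : D = G.transmission := funext hD
  have hRayleigh :=
    dotProduct_mulVec_le_specRad_mul (G.isHermitian_diagonal_add_dist G.transmission) 1
  rw [G.one_dotProduct_diagonal_transmission_add_dist_mulVec_one] at hRayleigh
  have hmin : (n : ℝ) * G.transmission ⟨n - 1, by omega⟩ ≤ ∑ j, G.transmission j := by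
    simpa using card_nsmul_le_sum univ G.transmission _
      fun j _ => hord j ⟨n - 1, by omega⟩ (Fin.le_def.2 (by simp; omega))
  rw [ge_iff_le, sum_Iio_sub_eq_sum_sub_card_mul]
  refine half_three_mul_sub_one_add_sqrt_le (by positivity) (by simpa [dotProduct] using hRayleigh)
    hmin ?_
  simpa using hconn.card_sub_one_le_transmission _
end

section
/- Let G be a connected graph on n ≥ 2 vertices. For real α, with M = max_i 𝔻_i, N = max_{i≠j} d_{ij}𝔻_jᵅ/𝔻_iᵅ, and (^α 𝕄)_i + 𝔻_i ordered nonincreasingly, one has for each 1 ≤ i ≤ n: ρ(𝔻ℚ(G)) ≤ ((^α 𝕄)_i + 𝔻_i + M − N + √(((^α 𝕄)_i + 𝔻_i − M + N)² + 4N·Σ_{k=1}^{i−1}((^α 𝕄)_k + 𝔻_k − (^α 𝕄)_i − 𝔻_i)))/2. -/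
open Matrix Finset Real

/-!
Collatz–Wielandt: if a nonnegative matrix `B` and a positive vector `e` satisfy `B e ≤ r e`
entrywise, every eigenvalue of `B` has modulus at most `r`. Put `w_k = 𝔻_kᵅ`,
`s_k = (ᵅ𝕄)_k + 𝔻_k`, `u_k = (s_k - s_i)⁺`, `T = Σ_k u_k`, `γ = r - M + N`, and test
`e_k = w_k (γ + u_k)`. Since `d_pp = 0` and `d_pk w_k ≤ N w_p`, row `p` of `𝔻ℚ e` is at most
`w_p (𝔻_p (γ + u_p) + γ (ᵅ𝕄)_p + N (T - u_p))`, which is at most `r e_p` as soon as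
`N T ≤ (r - M + N) (r - s_i)`. The bound is the larger root of this quadratic; for nonincreasing
`s`, `T = Σ_{k<i} (s_k - s_i)`.
-/

theorem Multiset.foldr_max_le {α : Type*} [LinearOrder α] {s : Multiset α} {b c : α}
    (hb : b ≤ c) (h : ∀ x ∈ s, x ≤ c) : s.foldr max b ≤ c := by
  induction s using Multiset.induction_on with
  | empty => simpa using hb
  | cons a s ih =>
    rw [Multiset.foldr_cons]
    exact max_le (h a (Multiset.mem_cons_self a s))
      (ih fun x hx => h x (Multiset.mem_cons_of_mem hx))

section CollatzWielandt

variable {ι : Type*} [Fintype ι]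

theorem Matrix.exists_mulVec_eq_smul_of_mem_roots_charpoly [DecidableEq ι]
    (B : Matrix ι ι ℂ) {z : ℂ} (hz : z ∈ B.charpoly.roots) :
    ∃ v : ι → ℂ, v ≠ 0 ∧ B *ᵥ v = z • v := by
  have hspec : z ∈ spectrum ℂ B.toLin' := by
    rw [spectrum_toLin', mem_spectrum_iff_isRoot_charpoly]
    exact (Polynomial.mem_roots'.1 hz).2
  obtain ⟨v, hv⟩ := (Module.End.hasEigenvalue_iff_mem_spectrum.2 hspec).exists_hasEigenvector
  exact ⟨v, hv.2, by simpa using hv.apply_eq_smul⟩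

theorem Matrix.norm_le_of_mulVec_eq_smul_of_mulVec_le {A : Matrix ι ι ℝ}
    (hA : ∀ i j, 0 ≤ A i j) {e : ι → ℝ} (he : ∀ i, 0 < e i) {r : ℝ}
    (hAe : ∀ i, (A *ᵥ e) i ≤ r * e i) {z : ℂ} {v : ι → ℂ} (hv : v ≠ 0)
    (hz : A.map Complex.ofReal *ᵥ v = z • v) : ‖z‖ ≤ r := by
  obtain ⟨q, hq⟩ := Function.ne_iff.1 hv
  -- `p` is where `|v|` is largest relative to `e`, so `|v| ≤ t e` with equality at `p`
  obtain ⟨p, -, hp⟩ := exists_max_image univ (fun k => ‖v k‖ / e k) ⟨q, mem_univ q⟩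
  set t := ‖v p‖ / e p
  have ht : 0 < t := (div_pos (norm_pos_iff.2 hq) (he q)).trans_le (hp q (mem_univ q))
  have hvp : 0 < ‖v p‖ := (div_pos_iff_of_pos_right (he p)).1 ht
  have htp : t * e p = ‖v p‖ := div_mul_cancel₀ _ (he p).ne'
  have hv_le : ∀ k, ‖v k‖ ≤ t * e k := fun k => (div_le_iff₀ (he k)).1 (hp k (mem_univ k))
  refine le_of_mul_le_mul_right ?_ hvp
  calc ‖z‖ * ‖v p‖ = ‖∑ k, (A p k : ℂ) * v k‖ := by
        rw [← norm_mul, ← smul_eq_mul, ← Pi.smul_apply, ← hz]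
        simp [mulVec, dotProduct]
    _ ≤ ∑ k, A p k * (t * e k) := by
        refine (norm_sum_le _ _).trans (sum_le_sum fun k _ => ?_)
        rw [norm_mul, Complex.norm_real, Real.norm_of_nonneg (hA p k)]
        exact mul_le_mul_of_nonneg_left (hv_le k) (hA p k)
    _ = t * (A *ᵥ e) p := by
        simp only [mulVec, dotProduct, mul_sum]
        exact sum_congr rfl fun k _ => by ring
    _ ≤ t * (r * e p) := mul_le_mul_of_nonneg_left (hAe p) ht.le
    _ = r * ‖v p‖ := by rw [← htp]; ring

end CollatzWielandt

theorem specRad_le_of_mulVec_le {n : ℕ} {A : Matrix (Fin n) (Fin n) ℝ}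
    (hA : ∀ i j, 0 ≤ A i j) {e : Fin n → ℝ} (he : ∀ i, 0 < e i) {r : ℝ} (hr : 0 ≤ r)
    (hAe : ∀ i, (A *ᵥ e) i ≤ r * e i) : specRad A ≤ r := by
  refine Multiset.foldr_max_le hr fun x hx => ?_
  obtain ⟨z, hz, rfl⟩ := Multiset.mem_map.1 hx
  obtain ⟨v, hv, hvz⟩ := exists_mulVec_eq_smul_of_mem_roots_charpoly _ hz
  exact norm_le_of_mulVec_eq_smul_of_mulVec_le hA he hAe hv hvz

section RowBound

variable {ι : Type*} [Fintype ι] [DecidableEq ι]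

theorem sum_mul_le_mul_sum_sub {f u : ι → ℝ} {C : ℝ} {p : ι} (hfp : f p = 0)
    (hf : ∀ k ≠ p, f k ≤ C) (hu : ∀ k, 0 ≤ u k) :
    ∑ k, f k * u k ≤ C * (∑ k, u k - u p) := by
  rw [← sum_erase (f := fun k => f k * u k) (a := p) univ (by simp [hfp]),
    ← sum_erase_eq_sub (mem_univ p), mul_sum]
  exact sum_le_sum fun k hk => mul_le_mul_of_nonneg_right (hf k (ne_of_mem_erase hk)) (hu k)

theorem diagonal_add_mulVec_le {D m w : ι → ℝ} {d : ι → ι → ℝ} {M N c r : ℝ}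
    (hd_self : ∀ p, d p p = 0) (hdN : ∀ p k, p ≠ k → d p k * w k ≤ N * w p)
    (hm : ∀ p, ∑ k, d p k * w k = m p * w p) (hw : ∀ p, 0 ≤ w p) (hDM : ∀ p, D p ≤ M)
    (hr : M - N ≤ r) (hT : N * ∑ k, max (m k + D k - c) 0 ≤ (r - M + N) * (r - c)) (p : ι) :
    ((diagonal D + of d) *ᵥ fun k => w k * (r - M + N + max (m k + D k - c) 0)) p ≤
      r * (w p * (r - M + N + max (m p + D p - c) 0)) := by
  set γ := r - M + N
  set u : ι → ℝ := fun k => max (m k + D k - c) 0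
  set T := ∑ k, u k
  have hu : ∀ k, 0 ≤ u k := fun k => le_max_right _ _
  have hγ : 0 ≤ γ := by simp only [γ]; linarith
  have hoff : ∑ k, d p k * (w k * (γ + u k)) ≤ w p * (γ * m p + N * (T - u p)) := by
    have hsplit :
        ∑ k, d p k * (w k * (γ + u k)) = γ * (m p * w p) + ∑ k, d p k * w k * u k := by
      rw [← hm p, mul_sum, ← sum_add_distrib]
      exact sum_congr rfl fun k _ => by ring
    have hfar := sum_mul_le_mul_sum_sub (f := fun k => d p k * w k) (u := u) (C := N * w p)
      (p := p) (by simp [hd_self]) (fun k hk => hdN p k hk.symm) hu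
    rw [hsplit]
    linarith
  have hdiag : D p * (γ + u p) + γ * m p + N * (T - u p) ≤ r * (γ + u p) := by
    rcases le_total c (m p + D p) with hc | hc
    · have hup : u p = m p + D p - c := max_eq_left (by linarith)
      rw [hup]
      nlinarith [mul_nonneg (sub_nonneg.2 (hDM p)) (sub_nonneg.2 hc)]
    · have hup : u p = 0 := max_eq_right (by linarith)
      rw [hup]
      nlinarith [mul_nonneg hγ (sub_nonneg.2 hc)]
  have hrow : ((diagonal D + of d) *ᵥ fun k => w k * (γ + u k)) p =
      D p * (w p * (γ + u p)) + ∑ k, d p k * (w k * (γ + u k)) := by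
    rw [add_mulVec, Pi.add_apply, mulVec_diagonal]
    rfl
  rw [hrow]
  linarith [mul_le_mul_of_nonneg_left hdiag (hw p)]

end RowBound

theorem le_larger_root_and_sub_mul_sub_eq {a b q x : ℝ} (hq : 0 ≤ q)
    (hx : x = (a + b + √((a - b) ^ 2 + 4 * q)) / 2) :
    a ≤ x ∧ b ≤ x ∧ (x - a) * (x - b) = q := by
  subst hx
  have hsq : √((a - b) ^ 2 + 4 * q) ^ 2 = (a - b) ^ 2 + 4 * q := sq_sqrt (by positivity)
  have habs : |a - b| ≤ √((a - b) ^ 2 + 4 * q) := abs_le_sqrt (by linarith)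
  refine ⟨?_, ?_, ?_⟩
  · linarith [le_abs_self (a - b)]
  · linarith [neg_abs_le (a - b)]
  · linear_combination hsq / 4

theorem specRad_diagonal_add_le {n : ℕ} {D m w : Fin n → ℝ} {d : Fin n → Fin n → ℝ}
    {M N c : ℝ} (hd : ∀ p k, 0 ≤ d p k) (hd_self : ∀ p, d p p = 0)
    (hdN : ∀ p k, p ≠ k → d p k * w k ≤ N * w p)
    (hm : ∀ p, ∑ k, d p k * w k = m p * w p) (hw : ∀ p, 0 < w p) (hD : ∀ p, 0 ≤ D p)
    (hDM : ∀ p, D p ≤ M) (hN : 0 ≤ N) (hc : 0 ≤ c) :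
    specRad (diagonal D + of d) ≤
      (c + M - N + √((c - M + N) ^ 2 + 4 * N * ∑ k, max (m k + D k - c) 0)) / 2 := by
  set T := ∑ k, max (m k + D k - c) 0
  have hNT : 0 ≤ N * T := mul_nonneg hN (sum_nonneg fun k _ => le_max_right _ _)
  set x := (c + M - N + √((c - M + N) ^ 2 + 4 * N * T)) / 2
  obtain ⟨hcx, hbx, hroot⟩ :=
    le_larger_root_and_sub_mul_sub_eq (a := c) (b := M - N) (x := x) hNT (by simp only [x]; ring_nf)
  -- the test vector is positive only when `r - M + N > 0`, hence the slack `ε`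
  refine le_of_forall_pos_le_add fun ε hε => ?_
  have hA : ∀ p k, 0 ≤ (diagonal D + of d) p k := fun p k => by
    rcases eq_or_ne p k with rfl | hpk
    · simpa [hd_self] using hD p
    · simpa [diagonal_apply_ne _ hpk] using hd p k
  refine specRad_le_of_mulVec_le hA (r := x + ε)
    (e := fun k => w k * (x + ε - M + N + max (m k + D k - c) 0)) (fun k => mul_pos (hw k)
    (add_pos_of_pos_of_nonneg (by linarith) (le_max_right _ _))) (by linarith) fun p => ?_
  refine diagonal_add_mulVec_le hd_self hdN hm (fun k => (hw k).le) hDM (by linarith) ?_ p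
  nlinarith [mul_nonneg hε.le (sub_nonneg.2 hcx), mul_nonneg hε.le (sub_nonneg.2 hbx)]

theorem SimpleGraph.Connected.sum_dist_pos {V : Type*} [Fintype V] [Nontrivial V]
    {G : SimpleGraph V} (hG : G.Connected) (v : V) : 0 < ∑ u, (G.dist v u : ℝ) := by
  obtain ⟨u, hu⟩ := exists_ne v
  exact (Nat.cast_pos.2 (hG.pos_dist_of_ne hu.symm)).trans_le
    (single_le_sum (fun _ _ => Nat.cast_nonneg _) (mem_univ u))

theorem Antitone.sum_Iio_sub_eq_sum_max {ι : Type*} [Fintype ι] [LinearOrder ι]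
    [LocallyFiniteOrderBot ι] {s : ι → ℝ} (hs : Antitone s) (i : ι) :
    ∑ k ∈ Iio i, (s k - s i) = ∑ k, max (s k - s i) 0 := by
  rw [← sum_subset (subset_univ (Iio i)) fun k _ hk =>
    max_eq_right (sub_nonpos.2 (hs (not_lt.1 (by simpa using hk))))]
  exact sum_congr rfl fun k hk => (max_eq_left (sub_nonneg.2 (hs (mem_Iio.1 hk).le))).symm

theorem stmt_18_general {n : ℕ} (G : SimpleGraph (Fin n)) (hconn : G.Connected)
    (α : ℝ) (D : Fin n → ℝ) (hD : ∀ i, D i = ∑ j, (G.dist i j : ℝ))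
    (𝕄 : Fin n → ℝ)
    (h𝕄 : ∀ i, 𝕄 i = (∑ j, (G.dist i j : ℝ) * (D j) ^ α) / (D i) ^ α)
    (hord : ∀ i j : Fin n, i ≤ j → 𝕄 j + D j ≤ 𝕄 i + D i)
    (M : ℝ) (hM : IsGreatest {x | ∃ i, x = D i} M)
    (N : ℝ)
    (hN : IsGreatest {x | ∃ i j : Fin n, i ≠ j ∧ x = (G.dist i j : ℝ) * (D j) ^ α / (D i) ^ α} N) :
    ∀ i : Fin n,
      specRad (Matrix.diagonal D + Matrix.of fun i j : Fin n => (G.dist i j : ℝ)) ≤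
        (𝕄 i + D i + M - N +
          Real.sqrt ((𝕄 i + D i - M + N) ^ 2 +
            4 * N * ∑ k ∈ Finset.Iio i, (𝕄 k + D k - 𝕄 i - D i))) / 2 := by
  intro i
  obtain ⟨a, b, hab, hNab⟩ := hN.1
  have : Nontrivial (Fin n) := ⟨⟨a, b, hab⟩⟩
  have hDpos : ∀ p, 0 < D p := fun p => hD p ▸ hconn.sum_dist_pos p
  have hw : ∀ p, 0 < D p ^ α := fun p => rpow_pos_of_pos (hDpos p) α
  have hm : ∀ p, ∑ k, (G.dist p k : ℝ) * D k ^ α = 𝕄 p * D p ^ α := fun p => by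
    rw [h𝕄 p, div_mul_cancel₀ _ (hw p).ne']
  have hN_nonneg : 0 ≤ N :=
    hNab ▸ div_nonneg (mul_nonneg (Nat.cast_nonneg _) (hw b).le) (hw a).le
  have h𝕄_nonneg : 0 ≤ 𝕄 i := by
    rw [h𝕄 i]
    exact div_nonneg (sum_nonneg fun k _ => mul_nonneg (Nat.cast_nonneg _) (hw k).le) (hw i).le
  have hs : Antitone fun k => 𝕄 k + D k := hord
  have hT :
      ∑ k ∈ Iio i, (𝕄 k + D k - 𝕄 i - D i) = ∑ k, max (𝕄 k + D k - (𝕄 i + D i)) 0 := by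
    simp only [sub_sub, ← hs.sum_Iio_sub_eq_sum_max i]
  rw [hT]
  exact specRad_diagonal_add_le (fun _ _ => Nat.cast_nonneg _) (by simp)
    (fun p k hpk => (div_le_iff₀ (hw p)).1 (hN.2 ⟨p, k, hpk, rfl⟩)) hm hw
    (fun p => (hDpos p).le) (fun p => hM.2 ⟨p, rfl⟩) hN_nonneg (by linarith [hDpos i])

theorem stmt_18 {n : ℕ} (hn : 2 ≤ n) (G : SimpleGraph (Fin n)) (hconn : G.Connected)
    (α : ℝ) (D : Fin n → ℝ) (hD : ∀ i, D i = ∑ j, (G.dist i j : ℝ))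
    (𝕄 : Fin n → ℝ)
    (h𝕄 : ∀ i, 𝕄 i = (∑ j, (G.dist i j : ℝ) * (D j) ^ α) / (D i) ^ α)
    (hord : ∀ i j : Fin n, i ≤ j → 𝕄 j + D j ≤ 𝕄 i + D i)
    (M : ℝ) (hM : IsGreatest {x | ∃ i, x = D i} M)
    (N : ℝ)
    (hN : IsGreatest {x | ∃ i j : Fin n, i ≠ j ∧ x = (G.dist i j : ℝ) * (D j) ^ α / (D i) ^ α} N) :
    ∀ i : Fin n,
      specRad (Matrix.diagonal D + Matrix.of fun i j : Fin n => (G.dist i j : ℝ)) ≤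
        (𝕄 i + D i + M - N +
          Real.sqrt ((𝕄 i + D i - M + N) ^ 2 +
            4 * N * ∑ k ∈ Finset.Iio i, (𝕄 k + D k - 𝕄 i - D i))) / 2 :=
  stmt_18_general G hconn α D hD 𝕄 h𝕄 hord M hM N hN
end
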